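/- arXiv:2308.12941 — 9 statements merged into one kernel-verified Lean document; each statement's English description precedes it below -/
import Mathlib

section
/- There do not exist matrices S₁, S₂, S₃, each a real linear combination of the bivectors γ_μ γ_ν (1 ≤ μ < ν ≤ 7), such that S₁, S₂, S₃ pairwise commute and the matrix exponentials satisfy exp(S₁) = Ω₁, exp(S₂) = Ω₂, exp(S₃) = Ω₃. -/
noncomputable def rsgn (j : Fin 3) (μ : Fin 7) : ℂ :=
  if (μ : ℕ) % 2 ^ (3 - (j : ℕ)) < 2 ^ (2 - (j : ℕ)) then -1 else 1

set_option maxHeartbeats 1000000 in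
/-- There is no triple of pairwise-commuting matrices S₁, S₂, S₃, each a real linear
combination of the bivectors γ_μ γ_ν (μ < ν), with exp Sᵢ = Ωᵢ, where
Ω₁ = γ₁γ₂γ₃γ₄, Ω₂ = γ₁γ₂γ₅γ₆, Ω₃ = γ₁γ₃γ₅γ₇ and the γ's satisfy the Clifford algebra. -/
theorem no_commuting_logarithms_of_triple (γ : Fin 7 → Matrix (Fin 8) (Fin 8) ℂ)
    (hcl : ∀ μ ν, γ μ * γ ν + γ ν * γ μ = if μ = ν then (2 : ℂ) • 1 else 0) :
    ¬ ∃ S : Fin 3 → Matrix (Fin 8) (Fin 8) ℂ,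
        (∀ i, ∃ ω : Fin 7 → Fin 7 → ℝ,
          S i = ∑ μ : Fin 7, ∑ ν : Fin 7, if μ < ν then ω μ ν • (γ μ * γ ν) else 0) ∧
        (∀ i j, S i * S j = S j * S i) ∧
        NormedSpace.exp (S 0) = γ 0 * γ 1 * γ 2 * γ 3 ∧
        NormedSpace.exp (S 1) = γ 0 * γ 1 * γ 4 * γ 5 ∧
        NormedSpace.exp (S 2) = γ 0 * γ 2 * γ 4 * γ 6 := by
  rintro ⟨S, hS, hcomm, h1, h2, h3⟩
  have hsq : ∀ μ, γ μ * γ μ = 1 := by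
    intro μ
    have h := hcl μ μ
    rw [if_pos rfl, ← two_smul ℂ (γ μ * γ μ)] at h
    exact smul_right_injective (Matrix (Fin 8) (Fin 8) ℂ) two_ne_zero h
  have hswap : ∀ a b : Fin 7, a ≠ b → γ a * γ b = -(γ b * γ a) := by
    intro a b h
    have h2 := hcl a b
    rw [if_neg h] at h2
    exact eq_neg_of_add_eq_zero_left h2
  have hs : ∀ a b : Fin 7, a < b → γ b * γ a = -(γ a * γ b) :=
    fun a b h => hswap b a (ne_of_gt h)
  have hs' : ∀ a b : Fin 7, a < b → ∀ X, γ b * (γ a * X) = -(γ a * (γ b * X)) := by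
    intro a b h X
    rw [← mul_assoc, hs a b h, neg_mul, mul_assoc]
  have hq' : ∀ (a : Fin 7) (X : Matrix (Fin 8) (Fin 8) ℂ), γ a * (γ a * X) = X := by
    intro a X; rw [← mul_assoc, hsq, one_mul]
  set Ω : Fin 3 → Matrix (Fin 8) (Fin 8) ℂ :=
    ![γ 0 * γ 1 * γ 2 * γ 3, γ 0 * γ 1 * γ 4 * γ 5, γ 0 * γ 2 * γ 4 * γ 6] with hΩ
  have hexp : ∀ j, NormedSpace.exp (S j) = Ω j := by
    intro j
    fin_cases j
    · exact h1
    · exact h2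
    · exact h3
  have hmove : ∀ (j : Fin 3) (μ : Fin 7), Ω j * γ μ = rsgn j μ • (γ μ * Ω j) := by
    intro j μ
    fin_cases j <;> fin_cases μ <;>
      · simp only [hΩ, Matrix.cons_val_zero, Matrix.cons_val_one, Matrix.head_cons,
          Matrix.cons_val_two, Matrix.tail_cons, Fin.isValue]
        norm_num [rsgn]
        simp only [mul_assoc]
        simp (disch := decide) [hs, hs', hsq, hq']
  have hΩsq : ∀ j, Ω j * Ω j = 1 := by
    intro j
    fin_cases j
    · show (γ 0 * γ 1 * γ 2 * γ 3) * (γ 0 * γ 1 * γ 2 * γ 3) = 1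
      simp only [mul_assoc]
      simp (disch := decide) [hs, hs', hsq, hq']
    · show (γ 0 * γ 1 * γ 4 * γ 5) * (γ 0 * γ 1 * γ 4 * γ 5) = 1
      simp only [mul_assoc]
      simp (disch := decide) [hs, hs', hsq, hq']
    · show (γ 0 * γ 2 * γ 4 * γ 6) * (γ 0 * γ 2 * γ 4 * γ 6) = 1
      simp only [mul_assoc]
      simp (disch := decide) [hs, hs', hsq, hq']
  have conjS : ∀ j, Ω j * S 0 * Ω j = S 0 := by
    intro j
    have hc : S 0 * Ω j = Ω j * S 0 := by
      rw [← hexp j]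
      exact (Commute.exp_right (hcomm 0 j)).eq
    rw [← hc, mul_assoc, hΩsq, mul_one]
  have conjB : ∀ (j : Fin 3) (μ ν : Fin 7),
      Ω j * (γ μ * γ ν) * Ω j = (rsgn j μ * rsgn j ν) • (γ μ * γ ν) := by
    intro j μ ν
    rw [show Ω j * (γ μ * γ ν) * Ω j = ((Ω j * γ μ) * γ ν) * Ω j by rw [← mul_assoc]]
    rw [hmove j μ, smul_mul_assoc, smul_mul_assoc, mul_assoc (γ μ) (Ω j) (γ ν), hmove j ν,
      mul_smul_comm, smul_mul_assoc, smul_smul, mul_assoc, mul_assoc, hΩsq j, mul_one]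
  set Φ : (Fin 7 → Fin 7 → ℂ) → Matrix (Fin 8) (Fin 8) ℂ :=
    fun c => ∑ μ : Fin 7, ∑ ν : Fin 7, if μ < ν then c μ ν • (γ μ * γ ν) else 0 with hΦ
  have hΦconj : ∀ (j : Fin 3) (c : Fin 7 → Fin 7 → ℂ),
      Ω j * Φ c * Ω j = Φ (fun μ ν => rsgn j μ * rsgn j ν * c μ ν) := by
    intro j c
    simp only [hΦ]
    simp only [Finset.mul_sum, Finset.sum_mul]
    refine Finset.sum_congr rfl fun μ _ => Finset.sum_congr rfl fun ν _ => ?_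
    split_ifs with h
    · rw [mul_smul_comm, smul_mul_assoc, conjB, smul_smul, mul_comm (c μ ν)]
    · rw [mul_zero, zero_mul]
  have hΦadd : ∀ c d : Fin 7 → Fin 7 → ℂ,
      Φ c + Φ d = Φ (fun μ ν => c μ ν + d μ ν) := by
    intro c d
    simp only [hΦ]
    simp only [← Finset.sum_add_distrib]
    refine Finset.sum_congr rfl fun μ _ => Finset.sum_congr rfl fun ν _ => ?_
    split_ifs with h
    · rw [add_smul]
    · rw [add_zero]
  obtain ⟨ω, hω⟩ := hS 0
  set c : Fin 7 → Fin 7 → ℂ := fun μ ν => ((ω μ ν : ℝ) : ℂ) with hcdef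
  have hS0 : S 0 = Φ c := by
    rw [hω]
    simp only [hΦ, hcdef]
    refine Finset.sum_congr rfl fun μ _ => Finset.sum_congr rfl fun ν _ => ?_
    split_ifs with h
    · rw [Complex.coe_smul]
    · rfl
  have step : ∀ (j : Fin 3) (d : Fin 7 → Fin 7 → ℂ), S 0 = Φ d →
      S 0 = Φ (fun μ ν => rsgn j μ * rsgn j ν * d μ ν) := by
    intro j d hd
    conv_lhs => rw [← conjS j, hd]
    exact hΦconj j d
  set c0 : Fin 7 → Fin 7 → ℂ := fun μ ν => rsgn 0 μ * rsgn 0 ν * c μ ν with hc0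
  set c1 : Fin 7 → Fin 7 → ℂ := fun μ ν => rsgn 1 μ * rsgn 1 ν * c μ ν with hc1
  set c2 : Fin 7 → Fin 7 → ℂ := fun μ ν => rsgn 2 μ * rsgn 2 ν * c μ ν with hc2
  set c01 : Fin 7 → Fin 7 → ℂ := fun μ ν => rsgn 1 μ * rsgn 1 ν * c0 μ ν with hc01
  set c02 : Fin 7 → Fin 7 → ℂ := fun μ ν => rsgn 2 μ * rsgn 2 ν * c0 μ ν with hc02
  set c12 : Fin 7 → Fin 7 → ℂ := fun μ ν => rsgn 2 μ * rsgn 2 ν * c1 μ ν with hc12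
  set c012 : Fin 7 → Fin 7 → ℂ := fun μ ν => rsgn 2 μ * rsgn 2 ν * c01 μ ν with hc012
  have e0 : S 0 = Φ c0 := step 0 c hS0
  have e1 : S 0 = Φ c1 := step 1 c hS0
  have e2 : S 0 = Φ c2 := step 2 c hS0
  have e01 : S 0 = Φ c01 := step 1 c0 e0
  have e02 : S 0 = Φ c02 := step 2 c0 e0
  have e12 : S 0 = Φ c12 := step 2 c1 e1
  have e012 : S 0 = Φ c012 := step 2 c01 e01
  have kk : S 0 + S 0 + S 0 + S 0 + S 0 + S 0 + S 0 + S 0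
      = Φ (fun μ ν => c μ ν + c0 μ ν + c1 μ ν + c2 μ ν + c01 μ ν + c02 μ ν + c12 μ ν
          + c012 μ ν) := by
    rw [← hΦadd, ← hΦadd, ← hΦadd, ← hΦadd, ← hΦadd, ← hΦadd, ← hΦadd,
      ← hS0, ← e0, ← e1, ← e2, ← e01, ← e02, ← e12, ← e012]
  have kz : Φ (fun μ ν => c μ ν + c0 μ ν + c1 μ ν + c2 μ ν + c01 μ ν + c02 μ ν + c12 μ ν
      + c012 μ ν) = 0 := by
    simp only [hΦ]
    refine Finset.sum_eq_zero fun μ _ => Finset.sum_eq_zero fun ν _ => ?_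
    split_ifs with h
    · refine smul_eq_zero_of_left ?_ _
      simp only [hc0, hc1, hc2, hc01, hc02, hc12, hc012]
      have hzz : (1 + rsgn 0 μ * rsgn 0 ν) * ((1 + rsgn 1 μ * rsgn 1 ν) *
          (1 + rsgn 2 μ * rsgn 2 ν)) = 0 := by
        fin_cases μ <;> fin_cases ν <;>
          first
            | exact absurd h (by decide)
            | (norm_num [rsgn])
      have expand : c μ ν + rsgn 0 μ * rsgn 0 ν * c μ ν + rsgn 1 μ * rsgn 1 ν * c μ ν +
          rsgn 2 μ * rsgn 2 ν * c μ ν +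
          rsgn 1 μ * rsgn 1 ν * (rsgn 0 μ * rsgn 0 ν * c μ ν) +
          rsgn 2 μ * rsgn 2 ν * (rsgn 0 μ * rsgn 0 ν * c μ ν) +
          rsgn 2 μ * rsgn 2 ν * (rsgn 1 μ * rsgn 1 ν * c μ ν) +
          rsgn 2 μ * rsgn 2 ν * (rsgn 1 μ * rsgn 1 ν * (rsgn 0 μ * rsgn 0 ν * c μ ν)) =
          (1 + rsgn 0 μ * rsgn 0 ν) * ((1 + rsgn 1 μ * rsgn 1 ν) *
            (1 + rsgn 2 μ * rsgn 2 ν)) * c μ ν := by ring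
      rw [expand, hzz, zero_mul]
    · rfl
  have hS0zero : S 0 = 0 := by
    have h8 : (8 : ℂ) • S 0 = 0 := by
      rw [show (8 : ℂ) • S 0 = S 0 + S 0 + S 0 + S 0 + S 0 + S 0 + S 0 + S 0 by module]
      rw [kk, kz]
    rcases smul_eq_zero.mp h8 with h | h
    · exact absurd h (by norm_num)
    · exact h
  have hΩ0 : Ω 0 = 1 := by rw [← hexp 0, hS0zero, NormedSpace.exp_zero]
  have hγ0 : γ 0 = -γ 0 := by
    have hm := hmove 0 0
    have hr : rsgn 0 0 = -1 := by norm_num [rsgn]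
    rw [hΩ0, one_mul, mul_one, hr, neg_smul, one_smul] at hm
    exact hm
  have hγ00 : γ 0 = 0 := by
    have h2 : (2 : ℂ) • γ 0 = 0 := by
      rw [two_smul]
      nth_rewrite 1 [hγ0]
      rw [neg_add_cancel]
    rcases smul_eq_zero.mp h2 with h | h
    · exact absurd h (by norm_num)
    · exact h
  have : (1 : Matrix (Fin 8) (Fin 8) ℂ) = 0 := by
    rw [← hsq 0, hγ00, mul_zero]
  exact one_ne_zero this
end

section
/- If S = Σ_{1 ≤ μ < ν ≤ 7} ω_{μν} γ_μ γ_ν with real coefficients ω_{μν} commutes with each of Ω₁, Ω₂ and Ω₃, then S = 0. -/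
open Matrix

abbrev ClRel (γ : Fin 7 → Matrix (Fin 8) (Fin 8) ℂ) : Prop :=
  ∀ μ ν, γ μ * γ ν + γ ν * γ μ = if μ = ν then (2 : ℂ) • 1 else 0

variable {γ : Fin 7 → Matrix (Fin 8) (Fin 8) ℂ}

lemma gsq (hcl : ClRel γ) (i : Fin 7) : γ i * γ i = 1 := by
  have h := hcl i i
  simp only [if_pos rfl] at h
  have h2 : (2:ℂ) • (γ i * γ i) = (2:ℂ) • (1 : Matrix (Fin 8) (Fin 8) ℂ) := by
    rw [two_smul]; exact h
  exact smul_right_injective _ (by norm_num) h2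

lemma gswap (hcl : ClRel γ) {i j : Fin 7} (h : i ≠ j) : γ i * γ j = -(γ j * γ i) := by
  have h' := hcl i j
  rw [if_neg h] at h'
  exact eq_neg_of_add_eq_zero_left h'

lemma gswap' (hcl : ClRel γ) {i j : Fin 7} (h : i ≠ j) (M : Matrix (Fin 8) (Fin 8) ℂ) :
    γ i * (γ j * M) = -(γ j * (γ i * M)) := by
  rw [← mul_assoc, gswap hcl h, neg_mul, mul_assoc]

lemma gswp (hcl : ClRel γ) {i j : Fin 7} (h : j < i) : γ i * γ j = -(γ j * γ i) :=
  gswap hcl h.ne'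

lemma gswp' (hcl : ClRel γ) {i j : Fin 7} (h : j < i) (M : Matrix (Fin 8) (Fin 8) ℂ) :
    γ i * (γ j * M) = -(γ j * (γ i * M)) := gswap' hcl h.ne' M

lemma gsq' (hcl : ClRel γ) (i : Fin 7) (M : Matrix (Fin 8) (Fin 8) ℂ) :
    γ i * (γ i * M) = M := by
  rw [← mul_assoc, gsq hcl, one_mul]

lemma tr2 (hcl : ClRel γ) {i j : Fin 7} (h : i ≠ j) : trace (γ i * γ j) = 0 := by
  have e : trace (γ i * γ j) = -trace (γ i * γ j) := by
    conv_lhs => rw [gswap hcl h]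
    rw [trace_neg, trace_mul_comm]
  have h2 : (2:ℂ) * trace (γ i * γ j) = 0 := by linear_combination e
  exact (mul_eq_zero.mp h2).resolve_left two_ne_zero

lemma tr4 (hcl : ClRel γ) {a b c d : Fin 7} (hab : a ≠ b) (hac : a ≠ c) (had : a ≠ d)
    (hbc : b ≠ c) (hbd : b ≠ d) (hcd : c ≠ d) :
    trace (γ a * (γ b * (γ c * γ d))) = 0 := by
  have e : γ b * (γ c * (γ d * γ a)) = -(γ a * (γ b * (γ c * γ d))) := by
    simp only [gswap hcl had.symm, mul_neg, neg_neg]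
    simp only [gswap' hcl hac.symm, mul_neg, neg_neg]
    simp only [gswap' hcl hab.symm, mul_neg, neg_neg]
  have e2 : trace (γ a * (γ b * (γ c * γ d))) = -trace (γ a * (γ b * (γ c * γ d))) := by
    conv_lhs => rw [trace_mul_comm]
    rw [show γ b * (γ c * γ d) * γ a = γ b * (γ c * (γ d * γ a)) by simp [mul_assoc], e,
      trace_neg]
  have h2 : (2:ℂ) * trace (γ a * (γ b * (γ c * γ d))) = 0 := by linear_combination e2
  exact (mul_eq_zero.mp h2).resolve_left two_ne_zero

lemma tr_zero (hcl : ClRel γ) {μ ν α β : Fin 7} (hμν : μ < ν) (hαβ : α < β)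
    (hne : ¬(α = μ ∧ β = ν)) : trace (γ ν * γ μ * (γ α * γ β)) = 0 := by
  rw [mul_assoc]
  by_cases h1 : α = μ
  · subst h1
    have hβν : β ≠ ν := fun hh => hne ⟨rfl, hh⟩
    rw [gsq' hcl]
    exact tr2 hcl hβν.symm
  by_cases h2 : α = ν
  · subst h2
    have hβμ : μ ≠ β := (hμν.trans hαβ).ne
    rw [gswap' hcl (hμν.ne') (γ α * γ β), gsq' hcl, trace_neg, tr2 hcl hβμ, neg_zero]
  by_cases h3 : β = μ
  · subst h3
    have : ν ≠ α := (hαβ.trans hμν).ne'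
    rw [gswap hcl h1, mul_neg, mul_neg, gsq' hcl, trace_neg, tr2 hcl this, neg_zero]
  by_cases h4 : β = ν
  · subst h4
    rw [gswap hcl h2, mul_neg, mul_neg, gswap' hcl hμν.ne (γ α), mul_neg, neg_neg,
      gsq' hcl, tr2 hcl (Ne.symm h1)]
  · exact tr4 hcl hμν.ne' (Ne.symm h2) (Ne.symm h4) (Ne.symm h1) (Ne.symm h3) hαβ.ne

lemma tr_extract (hcl : ClRel γ) (ω : Fin 7 → Fin 7 → ℝ) {μ ν : Fin 7} (hμν : μ < ν) :
    trace ((γ ν * γ μ) *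
      (∑ α : Fin 7, ∑ β : Fin 7, if α < β then ω α β • (γ α * γ β) else 0)) =
      (ω μ ν : ℂ) * 8 := by
  rw [Finset.mul_sum, trace_sum]
  have key : ∀ α : Fin 7, trace ((γ ν * γ μ) *
      (∑ β : Fin 7, if α < β then ω α β • (γ α * γ β) else 0)) =
      if α = μ then (ω μ ν : ℂ) * 8 else 0 := by
    intro α
    rw [Finset.mul_sum, trace_sum]
    have key2 : ∀ β : Fin 7, trace ((γ ν * γ μ) * (if α < β then ω α β • (γ α * γ β) else 0)) =
        if α = μ then (if β = ν then (ω μ ν : ℂ) * 8 else 0) else 0 := by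
      intro β
      by_cases h3 : α < β
      · rw [if_pos h3, mul_smul_comm, trace_smul]
        by_cases h1 : α = μ
        · by_cases h2 : β = ν
          · rw [h1, h2, if_pos rfl, if_pos rfl,
              show γ ν * γ μ * (γ μ * γ ν) = γ ν * (γ μ * (γ μ * γ ν)) from by
                rw [mul_assoc], gsq' hcl, gsq hcl, trace_one]
            simp [Complex.real_smul]
          · rw [tr_zero hcl hμν h3 (fun hh => h2 hh.2), smul_zero]
            simp [h2]
        · rw [tr_zero hcl hμν h3 (fun hh => h1 hh.1), smul_zero]
          simp [h1]
      · rw [if_neg h3, mul_zero, trace_zero]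
        have h12 : ¬(α = μ ∧ β = ν) := fun hh => h3 (hh.1 ▸ hh.2 ▸ hμν)
        split_ifs with hh1 hh2
        · exact (h12 ⟨hh1, hh2⟩).elim
        · rfl
        · rfl
    simp_rw [key2]
    simp [Finset.sum_ite_eq]
  simp_rw [key]
  simp [Finset.sum_ite_eq]

lemma kill (hcl : ClRel γ) (ω : Fin 7 → Fin 7 → ℝ) (S : Matrix (Fin 8) (Fin 8) ℂ)
    (hS : S = ∑ α : Fin 7, ∑ β : Fin 7, if α < β then ω α β • (γ α * γ β) else 0)
    {μ ν : Fin 7} (hμν : μ < ν) (Ω : Matrix (Fin 8) (Fin 8) ℂ)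
    (hsq : Ω * Ω = 1) (hc : S * Ω = Ω * S)
    (ha : Ω * (γ ν * γ μ) = -((γ ν * γ μ) * Ω)) : ω μ ν = 0 := by
  have hfix : Ω * S * Ω = S := by rw [← hc, mul_assoc, hsq, mul_one]
  have h8 : trace ((γ ν * γ μ) * S) = (ω μ ν : ℂ) * 8 := by
    rw [hS]; exact tr_extract hcl ω hμν
  have hneg : trace ((γ ν * γ μ) * S) = -trace ((γ ν * γ μ) * S) := by
    conv_lhs => rw [← hfix]
    rw [show (γ ν * γ μ) * (Ω * S * Ω) = ((γ ν * γ μ) * (Ω * S)) * Ω from by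
      simp [mul_assoc], trace_mul_comm, show Ω * ((γ ν * γ μ) * (Ω * S)) =
      (Ω * (γ ν * γ μ)) * (Ω * S) from by simp [mul_assoc], ha]
    rw [show -((γ ν * γ μ) * Ω) * (Ω * S) = -((γ ν * γ μ) * ((Ω * Ω) * S)) from by
      simp [mul_assoc], hsq, one_mul, trace_neg]
  have hz : trace ((γ ν * γ μ) * S) = 0 := by
    have h2 : (2:ℂ) * trace ((γ ν * γ μ) * S) = 0 := by linear_combination hneg
    exact (mul_eq_zero.mp h2).resolve_left two_ne_zero
  rw [h8] at hz
  rcases mul_eq_zero.mp hz with h | h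
  · exact_mod_cast h
  · norm_num at h

/-- If a real linear combination S = Σ_{μ<ν} ω_{μν} γ_μ γ_ν of Clifford bivectors
commutes with Ω₁ = γ₁γ₂γ₃γ₄, Ω₂ = γ₁γ₂γ₅γ₆ and Ω₃ = γ₁γ₃γ₅γ₇, then S = 0. -/
theorem bivector_commuting_with_triple_is_zero (γ : Fin 7 → Matrix (Fin 8) (Fin 8) ℂ)
    (hcl : ∀ μ ν, γ μ * γ ν + γ ν * γ μ = if μ = ν then (2 : ℂ) • 1 else 0)
    (ω : Fin 7 → Fin 7 → ℝ) (S : Matrix (Fin 8) (Fin 8) ℂ)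
    (hS : S = ∑ μ : Fin 7, ∑ ν : Fin 7, if μ < ν then ω μ ν • (γ μ * γ ν) else 0)
    (h1 : S * (γ 0 * γ 1 * γ 2 * γ 3) = (γ 0 * γ 1 * γ 2 * γ 3) * S)
    (h2 : S * (γ 0 * γ 1 * γ 4 * γ 5) = (γ 0 * γ 1 * γ 4 * γ 5) * S)
    (h3 : S * (γ 0 * γ 2 * γ 4 * γ 6) = (γ 0 * γ 2 * γ 4 * γ 6) * S) :
    S = 0 := by
  have hsq1 : (γ 0 * γ 1 * γ 2 * γ 3) * (γ 0 * γ 1 * γ 2 * γ 3) = 1 := by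
    simp [mul_assoc, gswp hcl, gswp' hcl, gsq hcl, gsq' hcl]
  have hsq2 : (γ 0 * γ 1 * γ 4 * γ 5) * (γ 0 * γ 1 * γ 4 * γ 5) = 1 := by
    simp [mul_assoc, gswp hcl, gswp' hcl, gsq hcl, gsq' hcl]
  have hsq3 : (γ 0 * γ 2 * γ 4 * γ 6) * (γ 0 * γ 2 * γ 4 * γ 6) = 1 := by
    simp [mul_assoc, gswp hcl, gswp' hcl, gsq hcl, gsq' hcl]
  have hz : ∀ μ ν : Fin 7, μ < ν → ω μ ν = 0 := by
    intro μ ν h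
    fin_cases μ <;> fin_cases ν <;>
      first
        | exact absurd h (by decide)
        | (refine kill hcl ω S hS h _ hsq1 h1 ?_
           simp [mul_assoc, gswp hcl, gswp' hcl, gsq hcl, gsq' hcl]
           done)
        | (refine kill hcl ω S hS h _ hsq2 h2 ?_
           simp [mul_assoc, gswp hcl, gswp' hcl, gsq hcl, gsq' hcl]
           done)
        | (refine kill hcl ω S hS h _ hsq3 h3 ?_
           simp [mul_assoc, gswp hcl, gswp' hcl, gsq hcl, gsq' hcl]
           done)
  rw [hS]
  refine Finset.sum_eq_zero fun μ _ => Finset.sum_eq_zero fun ν _ => ?_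
  by_cases h : μ < ν
  · rw [if_pos h, hz μ ν h, zero_smul]
  · rw [if_neg h]
end

section
/- The minimal chiral SU(5) model has no flat directions: let s ∈ ℂ⁵, let φ be an antisymmetric 5×5 complex matrix (φᵀ = −φ), and let c ∈ ℂ. If the rank-one matrix ss† (with entries s_j·conj(s_k)) satisfies ss† = c·1 + 2·φ†φ, then s = 0, φ = 0 and c = 0. -/
set_option maxRecDepth 4000


lemma sum_conj_mul_self_eq_zero {n : ℕ} (f : Fin n → ℂ)
    (h : ∑ l, (starRingEnd ℂ) (f l) * f l = 0) : ∀ l, f l = 0 := by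
  have h2 : ∑ l, (Complex.normSq (f l) : ℂ) = 0 := by
    rw [← h]; exact Finset.sum_congr rfl fun l _ => (Complex.normSq_eq_conj_mul_self).symm ▸ rfl
  have h3' : ((∑ l, Complex.normSq (f l) : ℝ) : ℂ) = 0 := by push_cast; exact h2
  have h3 : ∑ l, Complex.normSq (f l) = 0 := by exact_mod_cast h3'
  intro l
  exact Complex.normSq_eq_zero.mp
    ((Finset.sum_eq_zero_iff_of_nonneg (fun i _ => Complex.normSq_nonneg (f i))).mp h3 l
      (Finset.mem_univ l))

lemma case_c_zero (s : Fin 5 → ℂ) (φ : Matrix (Fin 5) (Fin 5) ℂ)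
    (hskew : ∀ j k, φ k j = - φ j k)
    (hG : ∀ j k, s j * (starRingEnd ℂ) (s k) = 2 * ∑ l, (starRingEnd ℂ) (φ l j) * φ l k) :
    s = 0 ∧ φ = 0 := by
  have hrel : ∀ j k l, (starRingEnd ℂ) (s k) * φ l j = (starRingEnd ℂ) (s j) * φ l k := by
    intro j k
    set a : Fin 5 → ℂ := fun l => (starRingEnd ℂ) (s k) * φ l j - (starRingEnd ℂ) (s j) * φ l k
      with ha
    have hz : ∑ l, (starRingEnd ℂ) (a l) * a l = 0 := by
      have expand : ∀ l ∈ Finset.univ, (starRingEnd ℂ) (a l) * a l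
          = (s k * (starRingEnd ℂ) (s k)) * ((starRingEnd ℂ) (φ l j) * φ l j)
          + (s j * (starRingEnd ℂ) (s j)) * ((starRingEnd ℂ) (φ l k) * φ l k)
          - (s k * (starRingEnd ℂ) (s j)) * ((starRingEnd ℂ) (φ l j) * φ l k)
          - (s j * (starRingEnd ℂ) (s k)) * ((starRingEnd ℂ) (φ l k) * φ l j) := by
        intro l _
        simp only [ha, map_sub, map_mul, Complex.conj_conj]
        ring
      rw [Finset.sum_congr rfl expand]
      simp only [Finset.sum_add_distrib, Finset.sum_sub_distrib, ← Finset.mul_sum]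
      linear_combination (-(s k * (starRingEnd ℂ) (s k))/2) * hG j j
        + (-(s j * (starRingEnd ℂ) (s j))/2) * hG k k
        + ((s k * (starRingEnd ℂ) (s j))/2) * hG j k
        + ((s j * (starRingEnd ℂ) (s k))/2) * hG k j
    intro l
    have := sum_conj_mul_self_eq_zero a hz l
    rw [ha] at this
    exact sub_eq_zero.mp this
  have hdiag : ∀ j, φ j j = 0 := fun j => by
    have := hskew j j; linear_combination this / 2
  have hsφ : ∀ j k, (starRingEnd ℂ) (s j) * φ j k = 0 := by
    intro j k
    have := hrel k j j
    rw [hdiag j, mul_zero] at this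
    exact this.symm ▸ this
  have step : ∀ j l k, (starRingEnd ℂ) (s j) * φ l k = -((starRingEnd ℂ) (s l) * φ j k) := by
    intro j l k
    calc (starRingEnd ℂ) (s j) * φ l k = (starRingEnd ℂ) (s k) * φ l j := (hrel j k l).symm
      _ = (starRingEnd ℂ) (s k) * -φ j l := by rw [hskew j l]
      _ = -((starRingEnd ℂ) (s k) * φ j l) := by ring
      _ = -((starRingEnd ℂ) (s l) * φ j k) := by rw [hrel l k j]
  have hss : ∀ j l k, (starRingEnd ℂ) (s j) * ((starRingEnd ℂ) (s j) * φ l k) = 0 := by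
    intro j l k
    linear_combination ((starRingEnd ℂ) (s j)) * step j l k
      + (-(starRingEnd ℂ) (s l)) * hsφ j k
  have hφ0 : φ = 0 := by
    by_contra hne
    have hex : ∃ l k, φ l k ≠ 0 := by
      by_contra h'
      push_neg at h'
      exact hne (Matrix.ext fun l k => h' l k)
    obtain ⟨l, k, hlk⟩ := hex
    have hs0 : ∀ j, s j = 0 := by
      intro j
      have h1 := hss j l k
      rw [← mul_assoc] at h1
      rcases mul_eq_zero.mp h1 with h2 | h2
      · rcases mul_eq_zero.mp h2 with h3 | h3 <;>
          simpa using h3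
      · exact absurd h2 hlk
    have h4 := hG k k
    rw [hs0 k, zero_mul] at h4
    have h5 : ∑ m, (starRingEnd ℂ) (φ m k) * φ m k = 0 := by
      linear_combination -h4 / 2
    exact hlk (sum_conj_mul_self_eq_zero (fun m => φ m k) h5 l)
  refine ⟨?_, hφ0⟩
  funext j
  have h6 := hG j j
  rw [hφ0] at h6
  simp only [Matrix.zero_apply, map_zero, zero_mul, mul_zero, Finset.sum_const_zero] at h6
  rw [Complex.mul_conj] at h6
  have h7 : Complex.normSq (s j) = 0 := by exact_mod_cast h6
  exact Complex.normSq_eq_zero.mp h7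


lemma su5_aux_c_ne_zero (s : Fin 5 → ℂ) (φ : Matrix (Fin 5) (Fin 5) ℂ) (c : ℂ) (hc : c ≠ 0)
    (hent : ∀ j k, s j * (starRingEnd ℂ) (s k)
      = (if j = k then c else 0) + 2 * ∑ l, (starRingEnd ℂ) (φ l j) * φ l k)
    (key : ∀ (w : Fin 5 → ℂ), φ.mulVec w = 0 →
      ∀ j, s j * (∑ k, (starRingEnd ℂ) (s k) * w k) = c * w j)
    (v : Fin 5 → ℂ) (hv0 : v ≠ 0) (hv : φ.mulVec v = 0) : False := by
  set α := ∑ k, (starRingEnd ℂ) (s k) * v k with hαdef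
  have hkv := key v hv
  have hα : α ≠ 0 := by
    intro h0
    apply hv0
    funext j
    have h1 := hkv j
    rw [← hαdef, h0, mul_zero] at h1
    show v j = 0
    exact ((mul_eq_zero.mp h1.symm).resolve_left hc)
  have hs_eq : ∀ j, s j = (c / α) * v j := by
    intro j
    field_simp
    linear_combination hkv j
  have hφs : φ.mulVec s = 0 := by
    funext l
    have h2 : ∑ k, φ l k * v k = 0 := by
      simpa [Matrix.mulVec, dotProduct] using congrFun hv l
    show ∑ k, φ l k * s k = 0
    calc ∑ k, φ l k * s k = ∑ k, (c / α) * (φ l k * v k) := by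
          exact Finset.sum_congr rfl fun k _ => by rw [hs_eq k]; ring
      _ = (c / α) * ∑ k, φ l k * v k := by rw [Finset.mul_sum]
      _ = 0 := by rw [h2, mul_zero]
  have hks := key s hφs
  have hsne : ∃ j0, s j0 ≠ 0 := by
    by_contra h'
    push_neg at h'
    apply hv0
    funext j
    have h1 := hkv j
    rw [h' j, zero_mul] at h1
    show v j = 0
    exact ((mul_eq_zero.mp h1.symm).resolve_left hc)
  obtain ⟨j0, hj0⟩ := hsne
  set β := ∑ k, (starRingEnd ℂ) (s k) * s k with hβdef
  have hcβ : c = β := by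
    have h1 := hks j0
    have h2 : s j0 * β = s j0 * c := by rw [h1]; ring
    exact (mul_left_cancel₀ hj0 h2).symm
  -- trace
  have htr : β = 5 * c + 2 * ∑ j, ∑ l, (starRingEnd ℂ) (φ l j) * φ l j := by
    calc β = ∑ j, (c + 2 * ∑ l, (starRingEnd ℂ) (φ l j) * φ l j) := by
          refine Finset.sum_congr rfl fun j _ => ?_
          have := hent j j
          rw [if_pos rfl] at this
          linear_combination this
      _ = 5 * c + 2 * ∑ j, ∑ l, (starRingEnd ℂ) (φ l j) * φ l j := by
          rw [Finset.sum_add_distrib, Finset.sum_const, ← Finset.mul_sum]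
          simp [Finset.card_univ]
  set A := ∑ j, Complex.normSq (s j) with hA
  set B := ∑ j, ∑ l, Complex.normSq (φ l j) with hB
  have eβ : β = ((A : ℝ) : ℂ) := by
    rw [hβdef, hA]
    push_cast
    exact Finset.sum_congr rfl fun j _ => by
      rw [mul_comm]; exact Complex.mul_conj _
  have eB : ∑ j, ∑ l, (starRingEnd ℂ) (φ l j) * φ l j = ((B : ℝ) : ℂ) := by
    rw [hB]
    push_cast
    refine Finset.sum_congr rfl fun j _ => Finset.sum_congr rfl fun l _ => ?_
    rw [mul_comm]; exact Complex.mul_conj _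
  rw [eβ, eB, hcβ, eβ] at htr
  have htrR : (A : ℝ) = 5 * A + 2 * B := by exact_mod_cast htr
  have hBpos : 0 ≤ B := Finset.sum_nonneg fun j _ => Finset.sum_nonneg fun l _ => Complex.normSq_nonneg _
  have hAbound : Complex.normSq (s j0) ≤ A :=
    Finset.single_le_sum (fun i _ => Complex.normSq_nonneg (s i)) (Finset.mem_univ j0)
  have := Complex.normSq_pos.mpr hj0
  linarith

/-- No flat directions in the minimal chiral SU(5) model: if s ∈ ℂ⁵, φ is an
antisymmetric 5×5 complex matrix, c ∈ ℂ, and ss† = c·1 + 2·φ†φ, then s, φ and c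
all vanish. -/
theorem su5_no_flat_directions (s : Fin 5 → ℂ) (φ : Matrix (Fin 5) (Fin 5) ℂ) (c : ℂ)
    (hφ : φ.transpose = -φ)
    (h : Matrix.of (fun j k => s j * (starRingEnd ℂ) (s k))
        = c • (1 : Matrix (Fin 5) (Fin 5) ℂ) + (2 : ℂ) • (φ.conjTranspose * φ)) :
    s = 0 ∧ φ = 0 ∧ c = 0 := by
  have hent : ∀ j k, s j * (starRingEnd ℂ) (s k)
      = (if j = k then c else 0) + 2 * ∑ l, (starRingEnd ℂ) (φ l j) * φ l k := by
    intro j k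
    have := congrFun (congrFun h j) k
    simpa [Matrix.mul_apply, Matrix.one_apply, Matrix.conjTranspose_apply,
      Matrix.smul_apply, mul_ite, mul_one, mul_zero] using this
  have hskew : ∀ j k, φ k j = - φ j k := fun j k => congrFun (congrFun hφ j) k
  have key : ∀ (w : Fin 5 → ℂ), φ.mulVec w = 0 →
      ∀ j, s j * (∑ k, (starRingEnd ℂ) (s k) * w k) = c * w j := by
    intro w hw j
    have hww : ∀ l, ∑ k, φ l k * w k = 0 :=
      fun l => by simpa [Matrix.mulVec, dotProduct] using congrFun hw l
    calc s j * (∑ k, (starRingEnd ℂ) (s k) * w k)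
        = ∑ k, (s j * (starRingEnd ℂ) (s k)) * w k := by
          rw [Finset.mul_sum]; exact Finset.sum_congr rfl fun k _ => by ring
      _ = ∑ k, ((if j = k then c else 0) + 2 * ∑ l, (starRingEnd ℂ) (φ l j) * φ l k) * w k := by
          exact Finset.sum_congr rfl fun k _ => by rw [hent]
      _ = (∑ k, (if j = k then c else 0) * w k)
          + 2 * ∑ k, ∑ l, (starRingEnd ℂ) (φ l j) * (φ l k * w k) := by
          rw [Finset.mul_sum, ← Finset.sum_add_distrib]
          refine Finset.sum_congr rfl fun k _ => ?_
          rw [add_mul, mul_assoc, Finset.sum_mul]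
          congr 2
          exact Finset.sum_congr rfl fun l _ => mul_assoc _ _ _
      _ = c * w j + 2 * ∑ l, (starRingEnd ℂ) (φ l j) * (∑ k, φ l k * w k) := by
          rw [Finset.sum_comm]
          congr 1
          · simp [Finset.sum_ite_eq]
          · congr 1
            exact Finset.sum_congr rfl fun l _ => by rw [Finset.mul_sum]
      _ = c * w j := by simp [hww]
  have hdet : φ.det = 0 := by
    have h1 : φ.det = (-φ).det := by rw [← hφ, Matrix.det_transpose]
    rw [Matrix.det_neg] at h1
    norm_num [Fintype.card_fin] at h1
    linear_combination h1 / 2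
  obtain ⟨v, hv0, hv⟩ := Matrix.exists_mulVec_eq_zero_iff.mpr hdet
  by_cases hc : c = 0
  · have hG : ∀ j k, s j * (starRingEnd ℂ) (s k)
        = 2 * ∑ l, (starRingEnd ℂ) (φ l j) * φ l k := by
      intro j k
      have := hent j k
      rw [hc] at this
      simpa using this
    obtain ⟨hs0, hφ0⟩ := case_c_zero s φ hskew hG
    exact ⟨hs0, hφ0, hc⟩
  · exact absurd (su5_aux_c_ne_zero s φ c hc hent key v hv0 hv) not_false
end

section
/- Let n ≥ 1 and let a, b, c be traceless n×n complex matrices. Then Σ_{σ∈S₃} tr(P₊·D(t_{σ(1)})·D(t_{σ(2)})·D(t_{σ(3)})) = (n+4)·Σ_{σ∈S₃} tr(t_{σ(1)}·t_{σ(2)}·t_{σ(3)}), where (t₁,t₂,t₃) = (a,b,c) and the sums run over all six permutations σ of {1,2,3}. (This is the identity Tr{T^{(a}T^{b}T^{c)}} = (N+4)·Tr{t^{(a}t^{b}t^{c)}} relating the symmetrized anomaly trace of the symmetric two-index representation of SU(N) to that of the fundamental.) -/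
open Kronecker Matrix
private lemma trace_tau_kron {n : ℕ} (A B : Matrix (Fin n) (Fin n) ℂ) :
    ((Matrix.of fun p q : Fin n × Fin n => if p.1 = q.2 ∧ p.2 = q.1 then (1:ℂ) else 0) *
      (A ⊗ₖ B)).trace = (A * B).trace := by
  classical
  simp only [Matrix.trace, Matrix.diag, Matrix.mul_apply, Matrix.of_apply,
    kroneckerMap_apply, Fintype.sum_prod_type, ite_mul, one_mul, zero_mul]
  simp [ite_and, Finset.sum_ite_eq, Finset.sum_ite_eq', mul_comm]
  rw [Finset.sum_comm]

private lemma key {n : ℕ} (x y z : Matrix (Fin n) (Fin n) ℂ)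
    (hx : x.trace = 0) (hy : y.trace = 0) (hz : z.trace = 0) :
    ((2:ℂ)⁻¹ • (1 + (Matrix.of fun p q : Fin n × Fin n =>
        if p.1 = q.2 ∧ p.2 = q.1 then (1:ℂ) else 0)) *
      (x ⊗ₖ (1 : Matrix (Fin n) (Fin n) ℂ) + (1 : Matrix (Fin n) (Fin n) ℂ) ⊗ₖ x) *
      (y ⊗ₖ (1 : Matrix (Fin n) (Fin n) ℂ) + (1 : Matrix (Fin n) (Fin n) ℂ) ⊗ₖ y) *
      (z ⊗ₖ (1 : Matrix (Fin n) (Fin n) ℂ) + (1 : Matrix (Fin n) (Fin n) ℂ) ⊗ₖ z)).trace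
      = ((n:ℂ) + 3) * (x * y * z).trace + (x * z * y).trace := by
  simp only [Matrix.mul_assoc, smul_mul_assoc, trace_smul, Matrix.add_mul, Matrix.mul_add,
    Matrix.one_mul, ← Matrix.mul_kronecker_mul, Matrix.mul_one, trace_add,
    trace_kronecker, trace_tau_kron, hx, hy, hz, mul_zero, zero_mul, add_zero, zero_add,
    Matrix.trace_one, Fintype.card_fin]
  have h1 : (y*(z*x)).trace = (x*y*z).trace := by
    rw [trace_mul_comm y (z*x), Matrix.mul_assoc z x y, trace_mul_comm z (x*y)]
  have h2 : (z*(x*y)).trace = (x*y*z).trace := trace_mul_comm z (x*y)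
  have h3 : (x*(z*y)).trace = (x*z*y).trace := by rw [Matrix.mul_assoc]
  have h4 : (y*(x*z)).trace = (x*z*y).trace := trace_mul_comm y (x*z)
  have h5 : (x*(y*z)).trace = (x*y*z).trace := by rw [Matrix.mul_assoc]
  rw [h1, h2, h3, h4, h5, smul_eq_mul]
  ring

open Kronecker in
/-- Anomaly coefficient of the symmetric two-index representation of SU(n): for
traceless a, b, c, the symmetrized trace over the symmetric tensor square equals
(n+4) times the symmetrized trace in the fundamental. -/
theorem symmetric_rep_anomaly (n : ℕ) (hn : 1 ≤ n) (a b c : Matrix (Fin n) (Fin n) ℂ)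
    (ha : a.trace = 0) (hb : b.trace = 0) (hc : c.trace = 0) :
    let D : Matrix (Fin n) (Fin n) ℂ → Matrix (Fin n × Fin n) (Fin n × Fin n) ℂ :=
      fun t => t ⊗ₖ (1 : Matrix (Fin n) (Fin n) ℂ) + (1 : Matrix (Fin n) (Fin n) ℂ) ⊗ₖ t
    let τ : Matrix (Fin n × Fin n) (Fin n × Fin n) ℂ :=
      Matrix.of fun p q => if p.1 = q.2 ∧ p.2 = q.1 then 1 else 0
    let Pplus : Matrix (Fin n × Fin n) (Fin n × Fin n) ℂ := (2 : ℂ)⁻¹ • (1 + τ)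
    let t : Fin 3 → Matrix (Fin n) (Fin n) ℂ := ![a, b, c]
    ∑ σ : Equiv.Perm (Fin 3), (Pplus * D (t (σ 0)) * D (t (σ 1)) * D (t (σ 2))).trace
      = ((n : ℂ) + 4) * ∑ σ : Equiv.Perm (Fin 3), (t (σ 0) * t (σ 1) * t (σ 2)).trace := by
  intro D τ Pplus t
  have ht : ∀ i, (t i).trace = 0 := by
    intro i; fin_cases i <;> simpa [t]
  have hkey : ∀ σ : Equiv.Perm (Fin 3),
      (Pplus * D (t (σ 0)) * D (t (σ 1)) * D (t (σ 2))).trace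
        = ((n:ℂ) + 3) * (t (σ 0) * t (σ 1) * t (σ 2)).trace
          + (t (σ 0) * t (σ 2) * t (σ 1)).trace :=
    fun σ => key _ _ _ (ht _) (ht _) (ht _)
  rw [Finset.sum_congr rfl fun σ _ => hkey σ, Finset.sum_add_distrib, ← Finset.mul_sum]
  have hswap : ∑ σ : Equiv.Perm (Fin 3), (t (σ 0) * t (σ 2) * t (σ 1)).trace
      = ∑ σ : Equiv.Perm (Fin 3), (t (σ 0) * t (σ 1) * t (σ 2)).trace := by
    refine Fintype.sum_equiv (Equiv.mulRight (Equiv.swap (1:Fin 3) 2)) _ _ fun σ => ?_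
    simp [Equiv.Perm.mul_apply, Equiv.swap_apply_def]
  rw [hswap]
  ring
end

section
/- Let n ≥ 1 and let a, b, c be traceless n×n complex matrices. Then Σ_{σ∈S₃} tr(P₋·D(t_{σ(1)})·D(t_{σ(2)})·D(t_{σ(3)})) = (n−4)·Σ_{σ∈S₃} tr(t_{σ(1)}·t_{σ(2)}·t_{σ(3)}), where (t₁,t₂,t₃) = (a,b,c) and the sums run over all six permutations σ of {1,2,3}. (This is the identity Tr{T^{(a}T^{b}T^{c)}} = (N−4)·Tr{t^{(a}t^{b}t^{c)}} for the antisymmetric two-index representation of SU(N); in particular, for N = 5 the anomaly of one quintet cancels that of one antidecuplet.) -/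
open Kronecker

lemma trace_tau_mul (n : ℕ) (A B : Matrix (Fin n) (Fin n) ℂ) :
    ((Matrix.of fun p q : Fin n × Fin n => if p.1 = q.2 ∧ p.2 = q.1 then (1:ℂ) else 0)
      * (A ⊗ₖ B)).trace = (A * B).trace := by
  simp only [Matrix.trace, Matrix.diag, Matrix.mul_apply, Matrix.of_apply,
    Matrix.kroneckerMap_apply, Fintype.sum_prod_type, ite_mul, one_mul, zero_mul, ite_and,
    Finset.sum_ite_eq, Finset.mem_univ, if_true]
  rw [Finset.sum_comm]

lemma key_trace (n : ℕ) (x y z : Matrix (Fin n) (Fin n) ℂ)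
    (hx : x.trace = 0) (hy : y.trace = 0) (hz : z.trace = 0) :
    (((2 : ℂ)⁻¹ • ((1 : Matrix (Fin n × Fin n) (Fin n × Fin n) ℂ)
        - Matrix.of fun p q : Fin n × Fin n => if p.1 = q.2 ∧ p.2 = q.1 then (1:ℂ) else 0))
      * (x ⊗ₖ 1 + 1 ⊗ₖ x) * (y ⊗ₖ 1 + 1 ⊗ₖ y) * (z ⊗ₖ 1 + 1 ⊗ₖ z)).trace
    = ((n : ℂ) - 3) * (x*y*z).trace - (x*z*y).trace := by
  set τ : Matrix (Fin n × Fin n) (Fin n × Fin n) ℂ :=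
    Matrix.of fun p q => if p.1 = q.2 ∧ p.2 = q.1 then (1:ℂ) else 0 with hτ
  have expand : (x ⊗ₖ (1 : Matrix (Fin n) (Fin n) ℂ) + 1 ⊗ₖ x) * (y ⊗ₖ 1 + 1 ⊗ₖ y) * (z ⊗ₖ 1 + 1 ⊗ₖ z)
      = (x*y*z) ⊗ₖ 1 + (x*y) ⊗ₖ z + (x*z) ⊗ₖ y + x ⊗ₖ (y*z)
        + (y*z) ⊗ₖ x + y ⊗ₖ (x*z) + z ⊗ₖ (x*y) + 1 ⊗ₖ (x*y*z) := by
    simp only [add_mul, mul_add, ← Matrix.mul_kronecker_mul, Matrix.one_mul, Matrix.mul_one]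
    abel
  rw [Matrix.smul_mul, Matrix.smul_mul, Matrix.smul_mul, Matrix.sub_mul, Matrix.sub_mul,
    Matrix.sub_mul, Matrix.one_mul, Matrix.trace_smul, Matrix.trace_sub,
    mul_assoc τ, mul_assoc τ, expand]
  have h1 : ((x*y*z) ⊗ₖ (1:Matrix (Fin n) (Fin n) ℂ) + (x*y) ⊗ₖ z + (x*z) ⊗ₖ y + x ⊗ₖ (y*z)
        + (y*z) ⊗ₖ x + y ⊗ₖ (x*z) + z ⊗ₖ (x*y) + 1 ⊗ₖ (x*y*z)).trace
      = 2 * (n:ℂ) * (x*y*z).trace := by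
    simp [Matrix.trace_add, Matrix.trace_kronecker, hx, hy, hz]
    ring
  have h2 : (τ * ((x*y*z) ⊗ₖ (1:Matrix (Fin n) (Fin n) ℂ) + (x*y) ⊗ₖ z + (x*z) ⊗ₖ y + x ⊗ₖ (y*z)
        + (y*z) ⊗ₖ x + y ⊗ₖ (x*z) + z ⊗ₖ (x*y) + 1 ⊗ₖ (x*y*z))).trace
      = 6 * (x*y*z).trace + 2 * (x*z*y).trace := by
    simp only [Matrix.mul_add, Matrix.trace_add, hτ, trace_tau_mul, Matrix.mul_one,
      Matrix.one_mul]
    have c1 : (x*(y*z)).trace = (x*y*z).trace := by rw [mul_assoc]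
    have c2 : ((y*z)*x).trace = (x*y*z).trace := by rw [Matrix.trace_mul_comm, mul_assoc]
    have c3 : (y*(x*z)).trace = (x*z*y).trace := by rw [Matrix.trace_mul_comm]
    have c4 : (z*(x*y)).trace = (x*y*z).trace := by rw [Matrix.trace_mul_comm]
    rw [c1, c2, c3, c4]; ring
  rw [h1, h2]
  simp only [smul_eq_mul]
  ring

open Kronecker in
/-- Anomaly coefficient of the antisymmetric two-index representation of SU(n): for
traceless a, b, c, the symmetrized trace over the antisymmetric tensor square equals
(n−4) times the symmetrized trace in the fundamental. -/
theorem antisymmetric_rep_anomaly (n : ℕ) (hn : 1 ≤ n) (a b c : Matrix (Fin n) (Fin n) ℂ)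
    (ha : a.trace = 0) (hb : b.trace = 0) (hc : c.trace = 0) :
    let D : Matrix (Fin n) (Fin n) ℂ → Matrix (Fin n × Fin n) (Fin n × Fin n) ℂ :=
      fun t => t ⊗ₖ (1 : Matrix (Fin n) (Fin n) ℂ) + (1 : Matrix (Fin n) (Fin n) ℂ) ⊗ₖ t
    let τ : Matrix (Fin n × Fin n) (Fin n × Fin n) ℂ :=
      Matrix.of fun p q => if p.1 = q.2 ∧ p.2 = q.1 then 1 else 0
    let Pminus : Matrix (Fin n × Fin n) (Fin n × Fin n) ℂ := (2 : ℂ)⁻¹ • (1 - τ)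
    let t : Fin 3 → Matrix (Fin n) (Fin n) ℂ := ![a, b, c]
    ∑ σ : Equiv.Perm (Fin 3), (Pminus * D (t (σ 0)) * D (t (σ 1)) * D (t (σ 2))).trace
      = ((n : ℂ) - 4) * ∑ σ : Equiv.Perm (Fin 3), (t (σ 0) * t (σ 1) * t (σ 2)).trace := by
  intro D τ Pminus t
  have ht : ∀ i, (t i).trace = 0 := by
    intro i
    fin_cases i
    · simpa [t] using ha
    · simpa [t] using hb
    · simpa [t] using hc
  have hkey : ∀ σ : Equiv.Perm (Fin 3),
      (Pminus * D (t (σ 0)) * D (t (σ 1)) * D (t (σ 2))).trace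
        = ((n:ℂ) - 3) * (t (σ 0) * t (σ 1) * t (σ 2)).trace
          - (t (σ 0) * t (σ 2) * t (σ 1)).trace :=
    fun σ => key_trace n _ _ _ (ht _) (ht _) (ht _)
  have swapsum : ∑ σ : Equiv.Perm (Fin 3), (t (σ 0) * t (σ 2) * t (σ 1)).trace
      = ∑ σ : Equiv.Perm (Fin 3), (t (σ 0) * t (σ 1) * t (σ 2)).trace := by
    rw [← Equiv.sum_comp (Equiv.mulRight (Equiv.swap (1 : Fin 3) 2))
      (fun σ : Equiv.Perm (Fin 3) => (t (σ 0) * t (σ 1) * t (σ 2)).trace)]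
    refine Finset.sum_congr rfl fun σ _ => ?_
    have e0 : Equiv.swap (1 : Fin 3) 2 0 = 0 := by decide
    have e1 : Equiv.swap (1 : Fin 3) 2 1 = 2 := by decide
    have e2 : Equiv.swap (1 : Fin 3) 2 2 = 1 := by decide
    simp [Equiv.Perm.mul_apply, e0, e1, e2]
  calc ∑ σ : Equiv.Perm (Fin 3), (Pminus * D (t (σ 0)) * D (t (σ 1)) * D (t (σ 2))).trace
      = ∑ σ : Equiv.Perm (Fin 3), (((n:ℂ) - 3) * (t (σ 0) * t (σ 1) * t (σ 2)).trace
          - (t (σ 0) * t (σ 2) * t (σ 1)).trace) := Finset.sum_congr rfl fun σ _ => hkey σ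
    _ = ((n:ℂ) - 3) * ∑ σ : Equiv.Perm (Fin 3), (t (σ 0) * t (σ 1) * t (σ 2)).trace
          - ∑ σ : Equiv.Perm (Fin 3), (t (σ 0) * t (σ 2) * t (σ 1)).trace := by
        rw [Finset.sum_sub_distrib, Finset.mul_sum]
    _ = ((n : ℂ) - 4) * ∑ σ : Equiv.Perm (Fin 3), (t (σ 0) * t (σ 1) * t (σ 2)).trace := by
        rw [swapsum]; ring
end

section
/- Let m, h, u, b be complex numbers with m ≠ 0 and u³ ≠ b². If the stationarity equations −3u²/(2(u³−b²)²) + 3m/2 = 0 and b/(u³−b²)² + h = 0 hold, then b = −h·u²/m, u ≠ 0, and u satisfies m·u⁴·(1 − h²u/m²)² = 1. (Consequently the G₂ theory with three fundamental multiplets, mass m and Yukawa coupling h ≠ 0 has its vacua at the six roots of this degree-six polynomial equation.) -/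
/-- Stationarity equations of the G₂ effective superpotential: if m ≠ 0, u³ ≠ b²,
−3u²/(2(u³−b²)²) + 3m/2 = 0 and b/(u³−b²)² + h = 0, then b = −h·u²/m, u ≠ 0, and
m·u⁴·(1 − h²u/m²)² = 1. -/
theorem g2_vacuum_equation (m h u b : ℂ) (hm : m ≠ 0) (hub : u ^ 3 ≠ b ^ 2)
    (eq1 : -3 * u ^ 2 / (2 * (u ^ 3 - b ^ 2) ^ 2) + 3 * m / 2 = 0)
    (eq2 : b / (u ^ 3 - b ^ 2) ^ 2 + h = 0) :
    b = -h * u ^ 2 / m ∧ u ≠ 0 ∧ m * u ^ 4 * (1 - h ^ 2 * u / m ^ 2) ^ 2 = 1 := by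
  have hd : u ^ 3 - b ^ 2 ≠ 0 := sub_ne_zero.mpr hub
  have e1 : u ^ 2 = m * (u ^ 3 - b ^ 2) ^ 2 := by
    field_simp at eq1
    linear_combination -eq1 / 3
  have e2 : b = -h * (u ^ 3 - b ^ 2) ^ 2 := by
    field_simp at eq2
    linear_combination eq2
  have hu : u ≠ 0 := by
    intro h0
    apply pow_ne_zero 2 hd
    have : m * (u ^ 3 - b ^ 2) ^ 2 = 0 := by rw [← e1, h0]; ring
    exact (mul_eq_zero.mp this).resolve_left hm
  have hb : b = -h * u ^ 2 / m := by
    rw [eq_div_iff hm, e2, e1]; ring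
  refine ⟨hb, hu, ?_⟩
  -- u^3 - b^2 = u^3 - h^2 u^4 / m^2
  have key : (u ^ 3 - b ^ 2) = u ^ 3 * (1 - h ^ 2 * u / m ^ 2) := by
    rw [hb]; field_simp
  have : u ^ 2 = m * (u ^ 3 * (1 - h ^ 2 * u / m ^ 2)) ^ 2 := by rw [← key]; exact e1
  have hu2 : (u : ℂ) ^ 2 ≠ 0 := pow_ne_zero 2 hu
  field_simp at this
  have this2 : m ^ 4 = m * u ^ 4 * (m ^ 2 - h ^ 2 * u) ^ 2 :=
    mul_left_cancel₀ hu2 (by linear_combination u ^ 2 * m * this)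
  field_simp
  linear_combination -this
end

section
/- For every real κ with κ > 0 and κ ≠ 2/(3√3), the complex polynomial p(Z) = Z⁴(1 − κZ)² − 1 has degree 6 and exactly six distinct complex roots (i.e. p is separable). -/
/-!
At a multiple root `z` of `p = Z⁴(1 - κZ)² - 1` both `p` and `p' = 2Z³(1 - κZ)(2 - 3κZ)` vanish.
Since `p(z) = 0` forces `z ≠ 0` and `1 - κz ≠ 0`, we get `3κz = 2`, hence `1 - κz = 1/3`, `z⁴ = 9`
and `729κ⁴ = (3κz)⁴ · 9 = 16`; for `κ > 0` this is exactly the excluded value `κ = 2/(3√3)`.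
-/

open Polynomial

theorem Polynomial.card_roots_toFinset_eq_natDegree_of_isRoot_derivative {K : Type*} [Field K]
    [IsAlgClosed K] [DecidableEq K] {p : K[X]} (hp : p ≠ 0)
    (h : ∀ z, p.IsRoot z → ¬ (derivative p).IsRoot z) :
    p.roots.toFinset.card = p.natDegree := by
  have hnodup : p.roots.Nodup := by
    refine Multiset.nodup_iff_count_le_one.mpr fun z => ?_
    rw [count_roots, ← not_lt, one_lt_rootMultiplicity_iff_isRoot hp]
    exact fun ⟨h0, h1⟩ => h z h0 h1
  rw [Multiset.toFinset_card_of_nodup hnodup, (IsAlgClosed.splits p).natDegree_eq_card_roots]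

noncomputable def vacuumPoly {R : Type*} [CommRing R] (κ : R) : R[X] :=
  X ^ 4 * (1 - C κ * X) ^ 2 - 1

section vacuumPoly

variable {R : Type*} [CommRing R]

theorem natDegree_vacuumPoly [IsDomain R] {κ : R} (hκ : κ ≠ 0) : (vacuumPoly κ).natDegree = 6 := by
  unfold vacuumPoly
  compute_degree!

theorem derivative_vacuumPoly (κ : R) :
    derivative (vacuumPoly κ) = 2 * X ^ 3 * (1 - C κ * X) * (2 - 3 * C κ * X) := by
  simp only [vacuumPoly, derivative_sub, derivative_mul, derivative_pow, derivative_one,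
    derivative_C, derivative_X, Nat.cast_ofNat, C_ofNat]
  ring

theorem isRoot_vacuumPoly_iff {κ z : R} : (vacuumPoly κ).IsRoot z ↔ z ^ 4 * (1 - κ * z) ^ 2 = 1 := by
  simp [vacuumPoly, sub_eq_zero]

end vacuumPoly

theorem pow_four_eq_of_isRoot_vacuumPoly_of_isRoot_derivative {K : Type*} [Field K] [NeZero (2 : K)]
    {κ z : K} (h0 : (vacuumPoly κ).IsRoot z) (h1 : (derivative (vacuumPoly κ)).IsRoot z) :
    729 * κ ^ 4 = 16 := by
  rw [isRoot_vacuumPoly_iff] at h0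
  have hz : z ≠ 0 := by rintro rfl; simp at h0
  have hu : 1 - κ * z ≠ 0 := by intro h; simp [h] at h0
  have hκz : 3 * κ * z = 2 := by
    simp [derivative_vacuumPoly, hz, hu, two_ne_zero, sub_eq_zero] at h1
    exact h1.symm
  have hz4 : z ^ 4 = 9 := by linear_combination 9 * h0 + z ^ 4 * (4 - 3 * κ * z) * hκz
  linear_combination
    (27 * κ ^ 3 * z ^ 3 + 18 * κ ^ 2 * z ^ 2 + 12 * κ * z + 8) * hκz - 81 * κ ^ 4 * hz4

theorem Real.eq_two_div_three_mul_sqrt_three_of_mul_pow_four_eq {κ : ℝ} (hκ : 0 < κ)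
    (h : 729 * κ ^ 4 = 16) : κ = 2 / (3 * √3) := by
  have hsq : κ ^ 2 = (2 / (3 * √3)) ^ 2 := by
    rw [div_pow, mul_pow, Real.sq_sqrt zero_le_three]
    nlinarith [sq_nonneg κ]
  exact (pow_left_inj₀ hκ.le (by positivity) two_ne_zero).mp hsq

open Polynomial in
/-- For real κ > 0 with κ ≠ 2/(3√3), the complex polynomial p(Z) = Z⁴(1 − κZ)² − 1
has degree 6 and exactly six distinct complex roots. -/
theorem g2_six_distinct_vacua (κ : ℝ) (hκ : 0 < κ) (hκ' : κ ≠ 2 / (3 * Real.sqrt 3)) :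
    let p : Polynomial ℂ := X ^ 4 * (1 - C (κ : ℂ) * X) ^ 2 - 1
    p.natDegree = 6 ∧ p.roots.toFinset.card = 6 := by
  change (vacuumPoly (κ : ℂ)).natDegree = 6 ∧ (vacuumPoly (κ : ℂ)).roots.toFinset.card = 6
  have hdeg := natDegree_vacuumPoly (Complex.ofReal_ne_zero.mpr hκ.ne')
  refine ⟨hdeg, hdeg ▸ card_roots_toFinset_eq_natDegree_of_isRoot_derivative ?_ ?_⟩
  · exact ne_zero_of_natDegree_gt (n := 0) (by rw [hdeg]; norm_num)
  · intro z h0 h1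
    refine hκ' (Real.eq_two_div_three_mul_sqrt_three_of_mul_pow_four_eq hκ ?_)
    exact_mod_cast pow_four_eq_of_isRoot_vacuumPoly_of_isRoot_derivative h0 h1
end

section
/- BPS bound for domain walls: let W : ℂ → ℂ be complex-differentiable on all of ℂ, let φ : ℝ → ℂ be continuously differentiable, and let a ≤ b be real numbers. Then ∫_a^b (|φ'(z)|² + |W'(φ(z))|²) dz ≥ 2·|W(φ(b)) − W(φ(a))|. -/
open MeasureTheory in
/-- BPS bound for domain walls: for an entire superpotential W, a C¹ profile φ and
a ≤ b, the wall energy ∫_a^b (|φ'|² + |W'(φ)|²) is at least 2|W(φ(b)) − W(φ(a))|. -/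
theorem bps_bound_for_domain_walls (W : ℂ → ℂ) (hW : Differentiable ℂ W)
    (φ : ℝ → ℂ) (hφ : ContDiff ℝ 1 φ) (a b : ℝ) (hab : a ≤ b) :
    2 * ‖W (φ b) - W (φ a)‖
      ≤ ∫ z in a..b,
          (‖deriv φ z‖ ^ 2 + ‖deriv W (φ z)‖ ^ 2) := by
  have hφd : Differentiable ℝ φ := hφ.differentiable one_ne_zero
  have hφ' : Continuous (deriv φ) := hφ.continuous_deriv le_rfl
  have hWC : ContDiff ℂ 2 W := hW.contDiff
  have hW' : Continuous (deriv W) := (hWC.iterate_deriv' 1 1).continuous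
  have hcont : Continuous fun z => deriv W (φ z) * deriv φ z :=
    (hW'.comp hφ.continuous).mul hφ'
  have hder : ∀ z ∈ Set.uIcc a b,
      HasDerivAt (fun t => W (φ t)) (deriv W (φ z) * deriv φ z) z := by
    intro z _
    exact HasDerivAt.comp z (hW (φ z)).hasDerivAt (hφd z).hasDerivAt
  have hint : IntervalIntegrable (fun z => deriv W (φ z) * deriv φ z) volume a b :=
    hcont.intervalIntegrable a b
  have heq : ∫ z in a..b, deriv W (φ z) * deriv φ z = W (φ b) - W (φ a) :=
    intervalIntegral.integral_eq_sub_of_hasDerivAt hder hint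
  have h1 : ‖W (φ b) - W (φ a)‖
      ≤ ∫ z in a..b, ‖deriv W (φ z) * deriv φ z‖ := by
    rw [← heq]
    simpa using intervalIntegral.norm_integral_le_integral_norm (f := fun z =>
      deriv W (φ z) * deriv φ z) hab
  have h2 : ∫ z in a..b, 2 * ‖deriv W (φ z) * deriv φ z‖
      ≤ ∫ z in a..b,
          (‖deriv φ z‖ ^ 2 + ‖deriv W (φ z)‖ ^ 2) := by
    apply intervalIntegral.integral_mono_on hab
    · exact (continuous_const.mul (continuous_norm.comp hcont)).intervalIntegrable a b
    · exact ((continuous_norm.comp hφ').pow 2 |>.add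
        ((continuous_norm.comp (hW'.comp hφ.continuous)).pow 2)).intervalIntegrable a b
    · intro z _
      rw [norm_mul]
      have := two_mul_le_add_sq (‖deriv φ z‖) (‖deriv W (φ z)‖)
      nlinarith [this]
  calc 2 * ‖W (φ b) - W (φ a)‖
      ≤ 2 * ∫ z in a..b, ‖deriv W (φ z) * deriv φ z‖ := by linarith
    _ = ∫ z in a..b, 2 * ‖deriv W (φ z) * deriv φ z‖ := by
        rw [intervalIntegral.integral_const_mul]
    _ ≤ _ := h2
end

section
/- Single-monopole contribution to the Witten index phase-space integral: for every real g ≠ 0 and every β > 0, √(β/(8π³)) · ∫_{ℝ³} (g²/|c|⁴) · exp(−β g²/(2|c|²)) d³c = |g|. In particular the integral is independent of β. -/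
open MeasureTheory Real Set in
private lemma monopole_ball_vol :
    (volume (Metric.ball (0:EuclideanSpace ℝ (Fin 3)) 1)).toReal = 4/3 * π := by
  rw [EuclideanSpace.volume_ball]
  have h1 : Real.Gamma ((Fintype.card (Fin 3) : ℝ) / 2 + 1) = 3 / 4 * Real.sqrt π := by
    simp only [Fintype.card_fin]
    rw [show ((3:ℕ):ℝ)/2 = 1/2 + 1 by norm_num, Real.Gamma_add_one (by norm_num),
      Real.Gamma_add_one (by norm_num), Real.Gamma_one_half_eq]
    ring
  rw [h1]
  rw [ENNReal.toReal_mul, ENNReal.toReal_pow, ENNReal.toReal_ofReal (by norm_num),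
    ENNReal.toReal_ofReal (by positivity)]
  have hs : Real.sqrt π ^ 2 = π := Real.sq_sqrt pi_pos.le
  have hsp : Real.sqrt π > 0 := Real.sqrt_pos.2 pi_pos
  simp only [Fintype.card_fin]
  field_simp
  nlinarith [hs, hsp]

open MeasureTheory Real Set in
private lemma monopole_radial (g β : ℝ) :
    ∫ y in Ioi (0:ℝ), y ^ 2 • ((g ^ 2 / y ^ 4) * Real.exp (-β * g ^ 2 / (2 * y ^ 2)))
    = g ^ 2 * (Real.sqrt (π / (β * g ^ 2 / 2)) / 2) := by
  have key := integral_comp_rpow_Ioi (fun u : ℝ => Real.exp (-(β * g ^ 2 / 2) * u ^ 2))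
      (p := -1) (by norm_num)
  have hcong : ∫ y in Ioi (0:ℝ), y ^ 2 • ((g ^ 2 / y ^ 4) * Real.exp (-β * g ^ 2 / (2 * y ^ 2)))
      = ∫ y in Ioi (0:ℝ), g ^ 2 •
          ((|(-1:ℝ)| * y ^ ((-1:ℝ) - 1)) • Real.exp (-(β * g ^ 2 / 2) * (y ^ (-1:ℝ)) ^ 2)) := by
    refine setIntegral_congr_fun measurableSet_Ioi fun y hy => ?_
    have hy0 : (0:ℝ) < y := hy
    have h1 : y ^ ((-1:ℝ) - 1) = 1 / y ^ 2 := by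
      rw [show (-1:ℝ) - 1 = -2 by norm_num, Real.rpow_neg hy0.le,
        show (2:ℝ) = ((2:ℕ):ℝ) by norm_num, Real.rpow_natCast]
      simp [one_div]
    have h2 : (y ^ (-1:ℝ)) ^ 2 = 1 / y ^ 2 := by
      rw [Real.rpow_neg hy0.le, Real.rpow_one]
      field_simp
    rw [h1, h2, smul_eq_mul, smul_eq_mul, smul_eq_mul]
    have : -β * g ^ 2 / (2 * y ^ 2) = -(β * g ^ 2 / 2) * (1 / y ^ 2) := by ring
    rw [this]
    field_simp
    ring
  rw [hcong, integral_smul, key, smul_eq_mul, integral_gaussian_Ioi]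

open Real in
private lemma monopole_arith (g β : ℝ) (hg : g ≠ 0) (hβ : 0 < β) :
    Real.sqrt (β / (8 * π ^ 3)) *
      (3 * (4/3 * π * (g ^ 2 * (Real.sqrt (π / (β * g ^ 2 / 2)) / 2)))) = |g| := by
  have hπ := pi_pos
  have hA : (0:ℝ) ≤ β / (8 * π ^ 3) := by positivity
  have hs : |g| ^ 2 = g ^ 2 := sq_abs g
  have hgabs : (0:ℝ) < |g| := abs_pos.2 hg
  rw [show Real.sqrt (β / (8 * π ^ 3)) *
      (3 * (4/3 * π * (g ^ 2 * (Real.sqrt (π / (β * g ^ 2 / 2)) / 2))))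
      = (Real.sqrt (β / (8 * π ^ 3)) * Real.sqrt (π / (β * g ^ 2 / 2))) * (2 * π * g ^ 2) by ring,
    ← Real.sqrt_mul hA]
  have key : β / (8 * π ^ 3) * (π / (β * g ^ 2 / 2)) = (1 / (2 * π * |g|)) ^ 2 := by
    rw [div_pow, one_pow, mul_pow, mul_pow, hs]
    field_simp
    ring
  rw [key, Real.sqrt_sq (by positivity)]
  field_simp
  nlinarith [hs, hπ]

open MeasureTheory in
/-- Single-monopole contribution to the Witten index phase-space integral: for
g ≠ 0 and β > 0, √(β/(8π³)) · ∫_{ℝ³} (g²/|c|⁴)·exp(−βg²/(2|c|²)) d³c = |g|. -/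
theorem monopole_index_integral (g β : ℝ) (hg : g ≠ 0) (hβ : 0 < β) :
    Real.sqrt (β / (8 * Real.pi ^ 3)) *
        ∫ c : EuclideanSpace ℝ (Fin 3),
          (g ^ 2 / ‖c‖ ^ 4) * Real.exp (-β * g ^ 2 / (2 * ‖c‖ ^ 2))
      = |g| := by
  have h1 := integral_fun_norm_addHaar (volume : Measure (EuclideanSpace ℝ (Fin 3)))
      (fun r : ℝ => (g ^ 2 / r ^ 4) * Real.exp (-β * g ^ 2 / (2 * r ^ 2)))
  simp only [finrank_euclideanSpace, Fintype.card_fin] at h1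
  rw [h1, nsmul_eq_mul, smul_eq_mul, measureReal_def, monopole_ball_vol, monopole_radial g β]
  calc Real.sqrt (β / (8 * Real.pi ^ 3)) *
        ((3:ℕ) * (4/3 * Real.pi * (g ^ 2 * (Real.sqrt (Real.pi / (β * g ^ 2 / 2)) / 2))))
      = Real.sqrt (β / (8 * Real.pi ^ 3)) *
        (3 * (4/3 * Real.pi * (g ^ 2 * (Real.sqrt (Real.pi / (β * g ^ 2 / 2)) / 2)))) := by
        norm_num
    _ = |g| := monopole_arith g β hg hβ
end
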